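/- For any real a > 0 and positive integer n, ∑_{k=1}^{n} ψ₀(k+a)ψ₂(k+a) = −2∑_{k=1}^{n} ψ₁(k+a)/(k+a) + (a+n)ψ₀(a+n+1)ψ₂(a+n+1) − aψ₀(a+1)ψ₂(a+1) − (a+n)ψ₂(a+n+1) + aψ₂(a+1) + 2ψ₀(a+n+1)ψ₁(a+n+1) − 2ψ₁(a+n+1) − 2ψ₀(a+1)ψ₁(a+1) + 2ψ₁(a+1). -/

import Mathlib

open Finset

/-- The `m`-th polygamma function: the `(m+1)`-th derivative of `log ∘ Γ`. -/
noncomputable def psi (m : ℕ) (x : ℝ) : ℝ :=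
  iteratedDeriv (m + 1) (fun y => Real.log (Real.Gamma y)) x

/-!
Differentiating `log Γ(x + 1) = log x + log Γ(x)` gives the recurrences for `ψₘ`. With them,
`F(y) = (y - 1) ψ₀(y) ψ₂(y) - (y - 1) ψ₂(y) + 2 ψ₀(y) ψ₁(y) - 2 ψ₁(y)` satisfies
`F(x + 1) - F(x) = ψ₀(x) ψ₂(x) + 2 ψ₁(x) / x` for `x > 0`, so the sum telescopes to
`F(a + n + 1) - F(a + 1)`.
-/

open scoped Nat

lemma Real.analyticAt_Gamma {x : ℝ} (hx : 0 < x) : AnalyticAt ℝ Real.Gamma x := by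
  have hΓ : AnalyticAt ℂ Complex.Gamma x := by
    refine DifferentiableOn.analyticAt (s := {s : ℂ | 0 < s.re}) (fun s hs => ?_)
      ((isOpen_lt continuous_const Complex.continuous_re).mem_nhds (by simpa using hx))
    refine (Complex.differentiableAt_Gamma s fun m hm => ?_).differentiableWithinAt
    have : (0 : ℝ) < -m := by simpa [hm] using hs
    linarith [(m.cast_nonneg : (0 : ℝ) ≤ m)]
  refine ((Complex.reCLM.analyticAt _).comp
    (hΓ.restrictScalars.comp (Complex.ofRealCLM.analyticAt x))).congr ?_
  filter_upwards with y
  simp [Complex.Gamma_ofReal]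

lemma Real.contDiffAt_log_Gamma {x : ℝ} (hx : 0 < x) (n : ℕ) :
    ContDiffAt ℝ n (fun y => Real.log (Real.Gamma y)) x :=
  (Real.analyticAt_Gamma hx).contDiffAt.log (Real.Gamma_pos_of_pos hx).ne'

lemma Real.iteratedDeriv_succ_log (m : ℕ) (x : ℝ) :
    iteratedDeriv (m + 1) Real.log x = (-1) ^ m * m ! * x ^ (-1 - m : ℤ) := by
  rw [iteratedDeriv_succ', Real.deriv_log', iteratedDeriv_eq_iterate, iter_deriv_inv]

lemma psi_add_one (m : ℕ) {x : ℝ} (hx : 0 < x) :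
    psi m (x + 1) = psi m x + (-1) ^ m * m ! * x ^ (-1 - m : ℤ) := by
  have hlogΓ : (fun y => Real.log (Real.Gamma (y + 1))) =ᶠ[nhds x]
      Real.log + fun y => Real.log (Real.Gamma y) := by
    filter_upwards [Ioi_mem_nhds hx] with y (hy : 0 < y)
    rw [Pi.add_apply, Real.Gamma_add_one hy.ne',
      Real.log_mul hy.ne' (Real.Gamma_pos_of_pos hy).ne']
  rw [psi, ← congrFun (iteratedDeriv_comp_add_const _ _ 1) x, hlogΓ.iteratedDeriv_eq,
    iteratedDeriv_add (Real.contDiffAt_log.2 hx.ne') (Real.contDiffAt_log_Gamma hx _),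
    Real.iteratedDeriv_succ_log, psi, add_comm]

lemma psi_zero_add_one {x : ℝ} (hx : 0 < x) : psi 0 (x + 1) = psi 0 x + x⁻¹ := by
  simpa using psi_add_one 0 hx

lemma psi_one_add_one {x : ℝ} (hx : 0 < x) : psi 1 (x + 1) = psi 1 x - (x ^ 2)⁻¹ := by
  rw [psi_add_one 1 hx]; norm_num [zpow_neg, sub_eq_add_neg]

lemma psi_two_add_one {x : ℝ} (hx : 0 < x) : psi 2 (x + 1) = psi 2 x + 2 * (x ^ 3)⁻¹ := by
  rw [psi_add_one 2 hx]; norm_num [zpow_neg]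

lemma sum_Icc_comp_add_eq_sub {M : Type*} [AddCommGroup M] (g F : ℝ → M) {a : ℝ} (ha : 0 < a)
    (hF : ∀ x > 0, F (x + 1) - F x = g x) (n : ℕ) :
    ∑ k ∈ Icc 1 n, g (k + a) = F (a + n + 1) - F (a + 1) := by
  induction n with
  | zero => simp
  | succ n ih =>
    rw [sum_Icc_succ_top (by omega), ih, ← hF _ (by positivity)]
    push_cast
    rw [show (n + 1 : ℝ) + a = a + n + 1 by ring, show a + (n + 1) + 1 = a + n + 1 + 1 by ring]
    abel

def productAntidifference (f₀ f₁ f₂ : ℝ → ℝ) (y : ℝ) : ℝ :=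
  (y - 1) * f₀ y * f₂ y - (y - 1) * f₂ y + 2 * f₀ y * f₁ y - 2 * f₁ y

lemma productAntidifference_add_one_sub {f₀ f₁ f₂ : ℝ → ℝ} {x : ℝ} (hx : x ≠ 0)
    (h₀ : f₀ (x + 1) = f₀ x + x⁻¹) (h₁ : f₁ (x + 1) = f₁ x - (x ^ 2)⁻¹)
    (h₂ : f₂ (x + 1) = f₂ x + 2 * (x ^ 3)⁻¹) :
    productAntidifference f₀ f₁ f₂ (x + 1) - productAntidifference f₀ f₁ f₂ x =
      f₀ x * f₂ x + 2 * (f₁ x / x) := by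
  simp only [productAntidifference, h₀, h₁, h₂, add_sub_cancel_right]
  field_simp
  ring

theorem stmt_13_general (a : ℝ) (ha : 0 < a) (n : ℕ) :
    ∑ k ∈ Icc 1 n, psi 0 ((k : ℝ) + a) * psi 2 ((k : ℝ) + a) =
      -2 * ∑ k ∈ Icc 1 n, psi 1 ((k : ℝ) + a) / ((k : ℝ) + a) +
        (a + n) * psi 0 (a + n + 1) * psi 2 (a + n + 1) - a * psi 0 (a + 1) * psi 2 (a + 1) -
        (a + n) * psi 2 (a + n + 1) + a * psi 2 (a + 1) +
        2 * psi 0 (a + n + 1) * psi 1 (a + n + 1) - 2 * psi 1 (a + n + 1) -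
        2 * psi 0 (a + 1) * psi 1 (a + 1) + 2 * psi 1 (a + 1) := by
  have h := sum_Icc_comp_add_eq_sub _ _ ha (fun x hx => productAntidifference_add_one_sub hx.ne'
    (psi_zero_add_one hx) (psi_one_add_one hx) (psi_two_add_one hx)) n
  rw [sum_add_distrib, ← mul_sum] at h
  simp only [productAntidifference, add_sub_cancel_right] at h
  linear_combination h

theorem stmt_13 (a : ℝ) (ha : 0 < a) (n : ℕ) (hn : 0 < n) :
    ∑ k ∈ Icc 1 n, psi 0 ((k : ℝ) + a) * psi 2 ((k : ℝ) + a) =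
      -2 * ∑ k ∈ Icc 1 n, psi 1 ((k : ℝ) + a) / ((k : ℝ) + a) +
        (a + n) * psi 0 (a + n + 1) * psi 2 (a + n + 1) - a * psi 0 (a + 1) * psi 2 (a + 1) -
        (a + n) * psi 2 (a + n + 1) + a * psi 2 (a + 1) +
        2 * psi 0 (a + n + 1) * psi 1 (a + n + 1) - 2 * psi 1 (a + n + 1) -
        2 * psi 0 (a + 1) * psi 1 (a + 1) + 2 * psi 1 (a + 1) :=
  stmt_13_general a ha n
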